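/- arXiv:1409.6492 — 2 statements merged into one kernel-verified Lean document; each statement's English description precedes it below -/
import Mathlib

section
/- The resolvent U is m-transient if and only if its weak dual resolvent U* is m-transient. -/
open MeasureTheory ENNReal Filter Set

/-- A sub-Markovian resolvent of kernels on a measurable space `E`. -/
structure SubMarkovResolvent (E : Type*) [MeasurableSpace E] where
  /-- the kernel `U_α` for each `α > 0` -/
  kernel : ℝ → E → MeasureTheory.Measure E
  measurable_op : ∀ α : ℝ, 0 < α → ∀ f : E → ℝ≥0∞, Measurable f →
    Measurable (fun x => ∫⁻ y, f y ∂(kernel α x))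
  resolvent_eq : ∀ α β : ℝ, 0 < α → α ≤ β → ∀ f : E → ℝ≥0∞, Measurable f → ∀ x,
    ∫⁻ y, f y ∂(kernel α x)
      = (∫⁻ y, f y ∂(kernel β x))
        + ENNReal.ofReal (β - α) * ∫⁻ y, (∫⁻ z, f z ∂(kernel β y)) ∂(kernel α x)
  subMarkov : ∀ α : ℝ, 0 < α → ∀ x, ENNReal.ofReal α * kernel α x Set.univ ≤ 1

namespace SubMarkovResolvent

variable {E : Type*} [MeasurableSpace E]

/-- The action of `U_α` on positive measurable functions. -/
noncomputable def op (R : SubMarkovResolvent E) (α : ℝ) (f : E → ℝ≥0∞) (x : E) : ℝ≥0∞ :=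
  ∫⁻ y, f y ∂(R.kernel α x)

/-- The action of `U_α` on real-valued functions. -/
noncomputable def opR (R : SubMarkovResolvent E) (α : ℝ) (f : E → ℝ) (x : E) : ℝ :=
  ∫ y, f y ∂(R.kernel α x)

/-- The initial (potential) kernel `U = sup_{α > 0} U_α`. -/
noncomputable def pot (R : SubMarkovResolvent E) (f : E → ℝ≥0∞) (x : E) : ℝ≥0∞ :=
  ⨆ (α : ℝ) (_ : 0 < α), R.op α f x

/-- `m` is sub-invariant: `m ∘ (α U_α) ≤ m` for all `α > 0`. -/
def SubInvariant (R : SubMarkovResolvent E) (m : Measure E) : Prop :=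
  ∀ α : ℝ, 0 < α → ∀ f : E → ℝ≥0∞, Measurable f →
    ENNReal.ofReal α * ∫⁻ x, R.op α f x ∂m ≤ ∫⁻ x, f x ∂m

/-- `U` is `m`-transient. -/
def Transient (R : SubMarkovResolvent E) (m : Measure E) : Prop :=
  ∃ f : E → ℝ≥0∞, Measurable f ∧ (∫⁻ x, f x ∂m < ⊤) ∧
    (∀ᵐ x ∂m, 0 < f x) ∧ (∀ᵐ x ∂m, R.pot f x < ⊤)

/-- `U` is `m`-recurrent. -/
def Recurrent (R : SubMarkovResolvent E) (m : Measure E) : Prop :=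
  ∀ f : E → ℝ≥0∞, Measurable f → (∫⁻ x, f x ∂m < ⊤) →
    m {x | 0 < R.pot f x ∧ R.pot f x < ⊤} = 0

/-- `A` is `U`-absorbing with respect to `m`. -/
def Absorbing (R : SubMarkovResolvent E) (m : Measure E) (A : Set E) : Prop :=
  MeasurableSet A ∧ ∀ᵐ x ∂m, x ∈ A → R.pot (Set.indicator Aᶜ 1) x = 0

/-- `U` is `m`-irreducible. -/
def Irreducible (R : SubMarkovResolvent E) (m : Measure E) : Prop :=
  ∀ A : Set E, R.Absorbing m A → m A = 0 ∨ m Aᶜ = 0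

/-- `u` is `U`-excessive: supermedian and `α U_α u ↑ u` as `α → ∞`. -/
def Excessive (R : SubMarkovResolvent E) (u : E → ℝ≥0∞) : Prop :=
  Measurable u ∧ (∀ α : ℝ, 0 < α → ∀ x, ENNReal.ofReal α * R.op α u x ≤ u x) ∧
    (∀ x, (⨆ (α : ℝ) (_ : 0 < α), ENNReal.ofReal α * R.op α u x) = u x)

/-- The complete maximum principle for the initial kernel of `U`. -/
def CompleteMaxPrinciple (R : SubMarkovResolvent E) : Prop :=
  ∀ (f g : E → ℝ≥0∞) (c : ℝ≥0∞), Measurable f → Measurable g →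
    (∀ x, 0 < f x → R.pot f x ≤ R.pot g x + c) → ∀ x, R.pot f x ≤ R.pot g x + c

/-- `U` and `U*` are in weak duality with respect to `m`. -/
def InDuality (R S : SubMarkovResolvent E) (m : Measure E) : Prop :=
  ∀ α : ℝ, 0 < α → ∀ f g : E → ℝ≥0∞, Measurable f → Measurable g →
    ∫⁻ x, f x * R.op α g x ∂m = ∫⁻ x, g x * S.op α f x ∂m

/-- A real-valued function `v` is `U`-invariant with respect to `m`:
`U_α(v f) = v ⋅ U_α f` `m`-a.e. for all `α > 0` and bounded positive measurable `f`. -/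
def Invariant (R : SubMarkovResolvent E) (m : Measure E) (v : E → ℝ) : Prop :=
  ∀ α : ℝ, 0 < α → ∀ f : E → ℝ, Measurable f → (∀ x, 0 ≤ f x) → (∃ C : ℝ, ∀ x, f x ≤ C) →
    ∀ᵐ x ∂m, R.opR α (fun y => v y * f y) x = v x * R.opR α f x

end SubMarkovResolvent

/-!
Duality passes from the kernels `U_α` to the potential kernels by monotone convergence:
`∫ f · U g dm = ∫ g · U* f dm`. If `f > 0` is integrable with `U f < ∞` a.e., choose an integrable
`h > 0` and put `g = h / (1 + U f)`; then `g > 0` is integrable and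
`∫ f · U* g dm = ∫ g · U f dm ≤ ∫ h dm < ∞`, so `U* g < ∞` wherever `f > 0`, that is a.e.
The symmetric argument gives the converse.
-/

theorem MeasureTheory.exists_pos_lintegral_mul_lt_top {E : Type*} [MeasurableSpace E]
    (m : Measure E) [SigmaFinite m] {p : E → ℝ≥0∞} (hp : Measurable p)
    (hp_fin : ∀ᵐ x ∂m, p x < ⊤) :
    ∃ g : E → ℝ≥0∞, Measurable g ∧ ∫⁻ x, g x ∂m < ⊤ ∧ (∀ᵐ x ∂m, 0 < g x) ∧
      ∫⁻ x, g x * p x ∂m < ⊤ := by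
  obtain ⟨h, h_pos, h_meas, h_int⟩ := exists_pos_lintegral_lt_of_sigmaFinite m one_ne_zero
  have h_int_fin : ∫⁻ x, (h x : ℝ≥0∞) ∂m < ⊤ := h_int.trans one_lt_top
  refine ⟨fun x => h x * (1 + p x)⁻¹, h_meas.coe_nnreal_ennreal.mul (measurable_const.add hp).inv,
    ?_, ?_, ?_⟩
  · refine (lintegral_mono fun x => ?_).trans_lt h_int_fin
    exact mul_le_of_le_one_right' (ENNReal.inv_le_one.mpr le_self_add)
  · filter_upwards [hp_fin] with x hx
    exact ENNReal.mul_pos (coe_pos.mpr (h_pos x)).ne' (ENNReal.inv_pos.mpr (by simp [hx.ne])).ne'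
  · refine (lintegral_mono fun x => ?_).trans_lt h_int_fin
    have h_ratio : (1 + p x)⁻¹ * p x ≤ 1 := by
      rw [mul_comm, ← div_eq_mul_inv]
      exact ENNReal.div_le_of_le_mul (by rw [one_mul]; exact le_add_self)
    calc (h x : ℝ≥0∞) * (1 + p x)⁻¹ * p x = h x * ((1 + p x)⁻¹ * p x) := mul_assoc _ _ _
      _ ≤ h x := mul_le_of_le_one_right' h_ratio

theorem MeasureTheory.ae_lt_top_of_lintegral_mul_lt_top {E : Type*} [MeasurableSpace E]
    {m : Measure E} {f u : E → ℝ≥0∞} (hf : Measurable f) (hu : Measurable u)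
    (hf_pos : ∀ᵐ x ∂m, 0 < f x) (h_int : ∫⁻ x, f x * u x ∂m < ⊤) : ∀ᵐ x ∂m, u x < ⊤ := by
  filter_upwards [ae_lt_top (hf.mul hu) h_int.ne, hf_pos] with x hx hfx
  exact lt_top_iff_ne_top.mpr fun hux => by simp [hux, ENNReal.mul_top hfx.ne'] at hx

namespace SubMarkovResolvent

variable {E : Type*} [MeasurableSpace E]

theorem op_anti (R : SubMarkovResolvent E) {α β : ℝ} (hα : 0 < α) (hαβ : α ≤ β)
    {f : E → ℝ≥0∞} (hf : Measurable f) (x : E) : R.op β f x ≤ R.op α f x := by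
  simp only [op]
  rw [R.resolvent_eq α β hα hαβ f hf x]
  exact le_self_add

theorem pot_eq_iSup_nat (R : SubMarkovResolvent E) {f : E → ℝ≥0∞} (hf : Measurable f) (x : E) :
    R.pot f x = ⨆ n : ℕ, R.op (1 / ((n : ℝ) + 1)) f x := by
  refine le_antisymm (iSup₂_le fun α hα => ?_) (iSup_le fun n => ?_)
  · obtain ⟨n, hn⟩ := exists_nat_one_div_lt hα
    exact (R.op_anti (by positivity) hn.le hf x).trans
      (le_iSup (fun k : ℕ => R.op (1 / ((k : ℝ) + 1)) f x) n)
  · exact le_iSup₂ (f := fun (α : ℝ) (_ : 0 < α) => R.op α f x) _ (by positivity)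

theorem measurable_pot (R : SubMarkovResolvent E) {f : E → ℝ≥0∞} (hf : Measurable f) :
    Measurable (R.pot f) := by
  simp_rw [funext (R.pot_eq_iSup_nat hf)]
  exact Measurable.iSup fun n => R.measurable_op _ (by positivity) f hf

theorem lintegral_mul_pot (R : SubMarkovResolvent E) (m : Measure E)
    {f g : E → ℝ≥0∞} (hf : Measurable f) (hg : Measurable g) :
    ∫⁻ x, f x * R.pot g x ∂m = ⨆ n : ℕ, ∫⁻ x, f x * R.op (1 / ((n : ℝ) + 1)) g x ∂m := by
  simp_rw [R.pot_eq_iSup_nat hg, ENNReal.mul_iSup]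
  refine lintegral_iSup (fun n => hf.mul (R.measurable_op _ (by positivity) g hg))
    fun a b hab x => mul_le_mul_right (R.op_anti (by positivity) ?_ hg x) _
  gcongr

theorem InDuality.symm {R S : SubMarkovResolvent E} {m : Measure E} (hD : R.InDuality S m) :
    S.InDuality R m :=
  fun α hα f g hf hg => (hD α hα g f hg hf).symm

theorem InDuality.lintegral_mul_pot_eq {R S : SubMarkovResolvent E} {m : Measure E}
    (hD : R.InDuality S m) {f g : E → ℝ≥0∞} (hf : Measurable f) (hg : Measurable g) :
    ∫⁻ x, f x * R.pot g x ∂m = ∫⁻ x, g x * S.pot f x ∂m := by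
  rw [R.lintegral_mul_pot m hf hg, S.lintegral_mul_pot m hg hf]
  exact iSup_congr fun n => hD _ (by positivity) f g hf hg

theorem InDuality.transient {R S : SubMarkovResolvent E} {m : Measure E} [SigmaFinite m]
    (hD : R.InDuality S m) (hT : R.Transient m) : S.Transient m := by
  obtain ⟨f, hf, -, hf_pos, hf_pot⟩ := hT
  obtain ⟨g, hg, hg_int, hg_pos, hgf_int⟩ :=
    exists_pos_lintegral_mul_lt_top m (R.measurable_pot hf) hf_pot
  have h_dual : ∫⁻ x, f x * S.pot g x ∂m < ⊤ := by
    rw [hD.symm.lintegral_mul_pot_eq hf hg]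
    exact hgf_int
  exact ⟨g, hg, hg_int, hg_pos,
    ae_lt_top_of_lintegral_mul_lt_top hf (S.measurable_pot hg) hf_pos h_dual⟩

end SubMarkovResolvent

theorem transient_iff_dual_transient_general {E : Type*} [MeasurableSpace E]
    (R S : SubMarkovResolvent E) (m : MeasureTheory.Measure E) [MeasureTheory.SigmaFinite m]
    (hD : R.InDuality S m) :
    R.Transient m ↔ S.Transient m :=
  ⟨hD.transient, hD.symm.transient⟩

/-- `U` is `m`-transient iff its weak dual `U*` is `m`-transient. -/
theorem transient_iff_dual_transient {E : Type*} [MeasurableSpace E]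
    (R S : SubMarkovResolvent E) (m : MeasureTheory.Measure E) [MeasureTheory.SigmaFinite m]
    (hm : R.SubInvariant m) (hD : R.InDuality S m) :
    R.Transient m ↔ S.Transient m :=
  transient_iff_dual_transient_general R S m hD
end

section
/- Let u ∈ L^p(E,m), 1 ≤ p < ∞, satisfy αU_α u = u m-a.e. for all α > 0. Then for every constant c ≥ 0 the set {u ≤ c} is U-absorbing, and u is U-invariant; moreover αU*_α u = u m-a.e. for all α > 0. -/
open MeasureTheory ENNReal Filter Set

/-!
For `c ≥ 0` the function `(u - c)⁺` is `α`-submedian because `α U_α` is sub-Markovian. By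
Jensen and the sub-invariance of `m`, `‖α U_α (u - c)⁺‖_p ≤ ‖(u - c)⁺‖_p < ∞`, so a submedian
function in `L^p` is `α`-harmonic. Running `c` over the rationals shows that for `m`-a.e. `x`
with `u x ≥ 0` the measure `U_α(x, ·)` is carried by `{u ≤ u x}`; comparing masses in
`α U_α u⁺ (x) = u x` then forces `u = u x` `U_α(x, ·)`-a.e. and `α U_α 1 (x) = 1` when `u x > 0`.
The same for `-u` shows that `U_α(x, ·)` lives on the level set of `u x`. Duality turns
`U_α 1_{u ≤ q} = 0` on `{u > q}` into `U*_α 1_{u > q} = 0` on `{u ≤ q}`, and transfers the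
full mass of `α U_α` on the finite-measure sets `{|u| ≥ ε}` to `α U*_α`.
-/
section Measure

variable {Ω : Type*} [MeasurableSpace Ω] {μ : Measure Ω}

lemma rpow_lintegral_le_lintegral_rpow (hμ : μ univ ≤ 1) {p : ℝ} (hp : 1 ≤ p) {f : Ω → ℝ≥0∞}
    (hf : AEMeasurable f μ) : (∫⁻ y, f y ∂μ) ^ p ≤ ∫⁻ y, f y ^ p ∂μ := by
  have hp0 : 0 < p := zero_lt_one.trans_le hp
  have h := eLpNorm'_le_eLpNorm'_mul_rpow_measure_univ zero_lt_one hp hf.aestronglyMeasurable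
  simp only [eLpNorm'_eq_lintegral_enorm, enorm_eq_self, rpow_one, div_one, one_div] at h
  have hmass : μ univ ^ (1 - p⁻¹) ≤ 1 :=
    rpow_le_one hμ (sub_nonneg.2 (inv_le_one_of_one_le₀ hp))
  rw [← le_rpow_inv_iff hp0]
  calc ∫⁻ y, f y ∂μ ≤ (∫⁻ y, f y ^ p ∂μ) ^ p⁻¹ * μ univ ^ (1 - p⁻¹) := h
    _ ≤ (∫⁻ y, f y ^ p ∂μ) ^ p⁻¹ := mul_le_of_le_one_right' hmass

lemma ofReal_integral_le_lintegral_ofReal (f : Ω → ℝ) :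
    ENNReal.ofReal (∫ y, f y ∂μ) ≤ ∫⁻ y, ENNReal.ofReal (f y) ∂μ := by
  by_cases hf : Integrable f μ
  · rw [integral_eq_lintegral_pos_part_sub_lintegral_neg_part hf]
    exact (ofReal_le_ofReal (sub_le_self _ toReal_nonneg)).trans ofReal_toReal_le
  · simp [integral_undef hf]

lemma ae_eq_const_and_measure_univ_eq_one (hμ : μ univ ≤ 1) {f : Ω → ℝ≥0∞} {a : ℝ≥0∞}
    (ha : a ≠ 0) (ha' : a ≠ ⊤) (hfa : ∀ᵐ y ∂μ, f y ≤ a) (hint : ∫⁻ y, f y ∂μ = a) :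
    (∀ᵐ y ∂μ, f y = a) ∧ μ univ = 1 := by
  have hle : a * 1 ≤ a * μ univ :=
    calc a * 1 = ∫⁻ y, f y ∂μ := by rw [mul_one, hint]
      _ ≤ ∫⁻ _, a ∂μ := lintegral_mono_ae hfa
      _ = a * μ univ := lintegral_const a
  have hmass : μ univ = 1 := le_antisymm hμ ((ENNReal.mul_le_mul_iff_right ha ha').1 hle)
  refine ⟨ae_eq_of_ae_le_of_lintegral_le hfa (hint ▸ ha') aemeasurable_const ?_, hmass⟩
  rw [lintegral_const, hmass, mul_one, hint]

lemma ae_le_of_forall_rat_lt {f : Ω → ℝ} {a : ℝ} (h : ∀ q : ℚ, a < q → ∀ᵐ y ∂μ, f y ≤ q) :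
    ∀ᵐ y ∂μ, f y ≤ a := by
  filter_upwards [ae_all_iff.2 fun q => eventually_imp_distrib_left.2 (h q)] with y hy
  exact le_of_forall_lt_rat_imp_le hy

lemma ofReal_sub_le_mul_lintegral [IsFiniteMeasure μ] {t : ℝ} (ht : 0 ≤ t)
    (hμ : ENNReal.ofReal t * μ univ ≤ 1) {c : ℝ} (hc : 0 ≤ c) (u : Ω → ℝ) :
    ENNReal.ofReal (t * ∫ y, u y ∂μ - c)
      ≤ ENNReal.ofReal t * ∫⁻ y, ENNReal.ofReal (u y - c) ∂μ := by
  by_cases hu : Integrable u μ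
  · have hmass : t * μ.real univ ≤ 1 := by
      simpa [measureReal_def, toReal_mul, toReal_ofReal ht] using toReal_mono one_ne_top hμ
    have hshift : t * ∫ y, u y ∂μ - c ≤ t * ∫ y, (u y - c) ∂μ := by
      rw [integral_sub hu (integrable_const c), integral_const, smul_eq_mul]
      nlinarith
    calc ENNReal.ofReal (t * ∫ y, u y ∂μ - c) ≤ ENNReal.ofReal (t * ∫ y, (u y - c) ∂μ) :=
          ofReal_le_ofReal hshift
      _ = ENNReal.ofReal t * ENNReal.ofReal (∫ y, (u y - c) ∂μ) := ofReal_mul ht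
      _ ≤ ENNReal.ofReal t * ∫⁻ y, ENNReal.ofReal (u y - c) ∂μ := by
          gcongr; exact ofReal_integral_le_lintegral_ofReal _
  · rw [integral_undef hu, mul_zero, zero_sub, ofReal_eq_zero.2 (neg_nonpos.2 hc)]
    exact zero_le

end Measure

namespace SubMarkovResolvent

variable {E : Type*} [MeasurableSpace E] (R : SubMarkovResolvent E) {m : Measure E}

lemma isFiniteMeasure_kernel {α : ℝ} (hα : 0 < α) (x : E) :
    IsFiniteMeasure (R.kernel α x) := by
  refine ⟨lt_top_iff_ne_top.2 fun htop => ?_⟩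
  have h := R.subMarkov α hα x
  rw [htop, mul_top (ofReal_pos.2 hα).ne'] at h
  exact absurd h (by simp)

lemma smul_kernel_univ_le_one {α : ℝ} (hα : 0 < α) (x : E) :
    (ENNReal.ofReal α • R.kernel α x) univ ≤ 1 := by
  simpa using R.subMarkov α hα x

lemma op_le_op_of_le {α β : ℝ} (hα : 0 < α) (hαβ : α ≤ β) {f : E → ℝ≥0∞} (hf : Measurable f)
    (x : E) : R.op β f x ≤ R.op α f x := by
  rw [op, op, R.resolvent_eq α β hα hαβ f hf x]
  exact le_self_add

lemma pot_indicator_eq_zero {A : Set E} (hA : MeasurableSet A) {x : E}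
    (h : ∀ n : ℕ, R.kernel (1 / (n + 1)) x A = 0) : R.pot (A.indicator 1) x = 0 := by
  refine le_antisymm (iSup₂_le fun β hβ => ?_) zero_le
  obtain ⟨n, hn⟩ := exists_nat_one_div_lt hβ
  calc R.op β (A.indicator 1) x ≤ R.op (1 / (n + 1)) (A.indicator 1) x :=
        R.op_le_op_of_le (by positivity) hn.le (measurable_one.indicator hA) x
    _ = 0 := by rw [op, lintegral_indicator_one hA, h n]

lemma ofReal_mul_op_rpow_le {α : ℝ} (hα : 0 < α) {p : ℝ} (hp : 1 ≤ p) {f : E → ℝ≥0∞}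
    (hf : Measurable f) (x : E) :
    (ENNReal.ofReal α * R.op α f x) ^ p ≤ ENNReal.ofReal α * R.op α (fun y => f y ^ p) x := by
  have h := rpow_lintegral_le_lintegral_rpow (R.smul_kernel_univ_le_one hα x) hp hf.aemeasurable
  rwa [lintegral_smul_measure, lintegral_smul_measure] at h

lemma ae_eq_ofReal_mul_op_of_ae_le (hm : R.SubInvariant m) {α : ℝ} (hα : 0 < α) {p : ℝ}
    (hp : 1 ≤ p) {w : E → ℝ≥0∞} (hw : Measurable w) (hwp : ∫⁻ x, w x ^ p ∂m ≠ ⊤)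
    (hsub : ∀ᵐ x ∂m, w x ≤ ENNReal.ofReal α * R.op α w x) :
    ∀ᵐ x ∂m, w x = ENNReal.ofReal α * R.op α w x := by
  have hp0 : 0 < p := zero_lt_one.trans_le hp
  have hint : ∫⁻ x, (ENNReal.ofReal α * R.op α w x) ^ p ∂m ≤ ∫⁻ x, w x ^ p ∂m :=
    calc ∫⁻ x, (ENNReal.ofReal α * R.op α w x) ^ p ∂m
        ≤ ∫⁻ x, ENNReal.ofReal α * R.op α (fun y => w y ^ p) x ∂m :=
          lintegral_mono (R.ofReal_mul_op_rpow_le hα hp hw)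
      _ = ENNReal.ofReal α * ∫⁻ x, R.op α (fun y => w y ^ p) x ∂m :=
          lintegral_const_mul' _ _ ofReal_ne_top
      _ ≤ ∫⁻ x, w x ^ p ∂m := hm α hα _ (hw.pow_const p)
  have hmeas : Measurable fun x => (ENNReal.ofReal α * R.op α w x) ^ p :=
    ((R.measurable_op α hα w hw).const_mul _).pow_const p
  filter_upwards [ae_eq_of_ae_le_of_lintegral_le
    (hsub.mono fun x hx => rpow_le_rpow hx hp0.le) hwp hmeas.aemeasurable hint] with x hx
  exact rpow_left_injective hp0.ne' hx

lemma ae_ofReal_sub_eq_of_harmonic (hm : R.SubInvariant m) {p : ℝ≥0∞} (hp : 1 ≤ p)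
    (hp' : p ≠ ⊤) {u : E → ℝ} (hmu : Measurable u) (hu : MemLp u p m) {α : ℝ} (hα : 0 < α)
    (hh : ∀ᵐ x ∂m, α * R.opR α u x = u x) {c : ℝ} (hc : 0 ≤ c) :
    ∀ᵐ x ∂m, ENNReal.ofReal (u x - c)
      = ENNReal.ofReal α * R.op α (fun y => ENNReal.ofReal (u y - c)) x := by
  have hp0 : p ≠ 0 := (zero_lt_one.trans_le hp).ne'
  refine R.ae_eq_ofReal_mul_op_of_ae_le hm hα (p := p.toReal) ?_
    (hmu.sub_const c).ennreal_ofReal ?_ ?_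
  · simpa using toReal_mono hp' hp
  · refine ne_top_of_le_ne_top
      (lintegral_rpow_enorm_lt_top_of_eLpNorm_lt_top hp0 hp' hu.eLpNorm_lt_top).ne
      (lintegral_mono fun x => rpow_le_rpow ?_ toReal_nonneg)
    rw [Real.enorm_eq_ofReal_abs]
    exact ofReal_le_ofReal ((sub_le_self _ hc).trans (le_abs_self _))
  · filter_upwards [hh] with x hx
    have := R.isFiniteMeasure_kernel hα x
    rw [← hx]
    exact ofReal_sub_le_mul_lintegral hα.le (R.subMarkov α hα x) hc u

lemma ae_kernel_le_of_harmonic (hm : R.SubInvariant m) {p : ℝ≥0∞} (hp : 1 ≤ p)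
    (hp' : p ≠ ⊤) {u : E → ℝ} (hmu : Measurable u) (hu : MemLp u p m) {α : ℝ} (hα : 0 < α)
    (hh : ∀ᵐ x ∂m, α * R.opR α u x = u x) :
    ∀ᵐ x ∂m, 0 ≤ u x → ∀ᵐ y ∂(R.kernel α x), u y ≤ u x := by
  have hlevels : ∀ᵐ x ∂m, ∀ q : ℚ, 0 ≤ (q : ℝ) → ENNReal.ofReal (u x - q)
      = ENNReal.ofReal α * R.op α (fun y => ENNReal.ofReal (u y - q)) x :=
    ae_all_iff.2 fun q => eventually_imp_distrib_left.2
      (R.ae_ofReal_sub_eq_of_harmonic hm hp hp' hmu hu hα hh)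
  filter_upwards [hlevels] with x hx hux
  refine ae_le_of_forall_rat_lt fun q hq => ?_
  have h := hx q (hux.trans hq.le)
  rw [ofReal_eq_zero.2 (sub_nonpos.2 hq.le), eq_comm, mul_eq_zero, op,
    lintegral_eq_zero_iff (hmu.sub_const _).ennreal_ofReal] at h
  filter_upwards [h.resolve_left (ofReal_pos.2 hα).ne'] with y hy
  simpa using hy

lemma ae_kernel_eq_of_harmonic_of_pos (hm : R.SubInvariant m) {p : ℝ≥0∞} (hp : 1 ≤ p)
    (hp' : p ≠ ⊤) {u : E → ℝ} (hmu : Measurable u) (hu : MemLp u p m) {α : ℝ} (hα : 0 < α)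
    (hh : ∀ᵐ x ∂m, α * R.opR α u x = u x) :
    ∀ᵐ x ∂m, 0 < u x →
      (∀ᵐ y ∂(R.kernel α x), u y = u x) ∧ ENNReal.ofReal α * R.kernel α x univ = 1 := by
  have hα' : ENNReal.ofReal α ≠ 0 := (ofReal_pos.2 hα).ne'
  filter_upwards [R.ae_kernel_le_of_harmonic hm hp hp' hmu hu hα hh,
    R.ae_ofReal_sub_eq_of_harmonic hm hp hp' hmu hu hα hh le_rfl] with x hle hlevel hpos
  simp only [sub_zero, op, ← smul_eq_mul, ← lintegral_smul_measure] at hlevel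
  obtain ⟨heq, hmass⟩ := ae_eq_const_and_measure_univ_eq_one (R.smul_kernel_univ_le_one hα x)
    (ofReal_pos.2 hpos).ne' ofReal_ne_top
    ((Measure.ae_ennreal_smul_measure_iff hα').2
      ((hle hpos.le).mono fun y hy => ofReal_le_ofReal hy)) hlevel.symm
  refine ⟨?_, by simpa using hmass⟩
  filter_upwards [hle hpos.le, (Measure.ae_ennreal_smul_measure_iff hα').1 heq] with y hy hy'
  exact le_antisymm hy ((ofReal_le_ofReal_iff'.1 hy'.ge).resolve_right hpos.not_ge)

lemma ae_kernel_eq_of_harmonic (hm : R.SubInvariant m) {p : ℝ≥0∞} (hp : 1 ≤ p)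
    (hp' : p ≠ ⊤) {u : E → ℝ} (hmu : Measurable u) (hu : MemLp u p m) {α : ℝ} (hα : 0 < α)
    (hh : ∀ᵐ x ∂m, α * R.opR α u x = u x) :
    ∀ᵐ x ∂m, (∀ᵐ y ∂(R.kernel α x), u y = u x) ∧
      (u x ≠ 0 → ENNReal.ofReal α * R.kernel α x univ = 1) := by
  have hh' : ∀ᵐ x ∂m, α * R.opR α (-u) x = (-u) x :=
    hh.mono fun x hx => by simp [opR, integral_neg, ← hx]
  filter_upwards [R.ae_kernel_eq_of_harmonic_of_pos hm hp hp' hmu hu hα hh,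
    R.ae_kernel_eq_of_harmonic_of_pos hm hp hp' hmu.neg hu.neg hα hh',
    R.ae_kernel_le_of_harmonic hm hp hp' hmu hu hα hh,
    R.ae_kernel_le_of_harmonic hm hp hp' hmu.neg hu.neg hα hh'] with x hpos hneg hle hle'
  rcases lt_trichotomy (u x) 0 with hx | hx | hx
  · obtain ⟨hconst, hmass⟩ := hneg (by simpa using hx)
    exact ⟨hconst.mono fun y hy => by simpa using hy, fun _ => hmass⟩
  · refine ⟨?_, fun h => absurd hx h⟩
    filter_upwards [hle hx.ge, hle' (by simp [hx])] with y hy hy'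
    simp only [Pi.neg_apply, hx, neg_zero] at hy hy' ⊢
    linarith
  · exact ⟨(hpos hx).1, fun _ => (hpos hx).2⟩

end SubMarkovResolvent

namespace SubMarkovResolvent.InDuality

variable {E : Type*} [MeasurableSpace E] {R S : SubMarkovResolvent E} {m : Measure E}

lemma ae_dual_kernel_eq_zero (hD : R.InDuality S m) {α : ℝ} (hα : 0 < α) {A B : Set E}
    (hA : MeasurableSet A) (hB : MeasurableSet B) (h : ∀ᵐ x ∂m, x ∈ A → R.kernel α x B = 0) :
    ∀ᵐ x ∂m, x ∈ B → S.kernel α x A = 0 := by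
  have hdual := hD α hα _ _ (measurable_one.indicator hA) (measurable_one.indicator hB)
  have hR : (fun x => A.indicator 1 x * R.op α (B.indicator 1) x) =ᵐ[m] 0 := by
    filter_upwards [h] with x hx
    by_cases hxA : x ∈ A
    · simp [op, lintegral_indicator_one hB, hx hxA]
    · simp [hxA]
  have hmeas : Measurable fun x => B.indicator 1 x * S.op α (A.indicator 1) x :=
    (measurable_one.indicator hB).mul (S.measurable_op α hα _ (measurable_one.indicator hA))
  rw [lintegral_congr_ae hR, lintegral_zero_fun, eq_comm, lintegral_eq_zero_iff hmeas] at hdual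
  filter_upwards [hdual] with x hx hxB
  simpa [hxB, op, lintegral_indicator_one hA] using hx

lemma ae_dual_mass_eq_one (hD : R.InDuality S m) {α : ℝ} (hα : 0 < α) {B : Set E}
    (hB : MeasurableSet B) (hBm : m B ≠ ⊤)
    (h : ∀ᵐ x ∂m, x ∈ B → ENNReal.ofReal α * R.kernel α x B = 1) :
    ∀ᵐ x ∂m, x ∈ B → ENNReal.ofReal α * S.kernel α x univ = 1 := by
  have hdual : ∫⁻ x, R.kernel α x B ∂m = ∫⁻ x in B, S.kernel α x univ ∂m := by
    rw [← lintegral_indicator hB]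
    convert hD α hα 1 (B.indicator 1) measurable_const (measurable_one.indicator hB) using 2
    · simp [op, lintegral_indicator_one hB]
    · funext x
      by_cases hx : x ∈ B <;> simp [hx, op]
  have hint : ∫⁻ _ in B, 1 ∂m ≤ ∫⁻ x in B, ENNReal.ofReal α * S.kernel α x univ ∂m :=
    calc ∫⁻ _ in B, 1 ∂m = ∫⁻ x in B, ENNReal.ofReal α * R.kernel α x B ∂m :=
          setLIntegral_congr_fun_ae hB (h.mono fun x hx hxB => (hx hxB).symm)
      _ ≤ ∫⁻ x, ENNReal.ofReal α * R.kernel α x B ∂m := setLIntegral_le_lintegral _ _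
      _ = ∫⁻ x in B, ENNReal.ofReal α * S.kernel α x univ ∂m := by
          rw [lintegral_const_mul' _ _ ofReal_ne_top, lintegral_const_mul' _ _ ofReal_ne_top,
            hdual]
  have hle : ∀ᵐ x ∂m.restrict B, ENNReal.ofReal α * S.kernel α x univ ≤ 1 :=
    ae_of_all _ fun x => S.subMarkov α hα x
  have hfin : ∫⁻ x in B, ENNReal.ofReal α * S.kernel α x univ ∂m ≠ ⊤ :=
    ne_top_of_le_ne_top (by simpa using hBm) (lintegral_mono_ae hle)
  exact (ae_restrict_iff' hB).1 (ae_eq_of_ae_le_of_lintegral_le hle hfin aemeasurable_const hint)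

lemma ae_dual_kernel_le (hD : R.InDuality S m) {α : ℝ} (hα : 0 < α) {u : E → ℝ}
    (hmu : Measurable u) (h : ∀ᵐ x ∂m, ∀ᵐ y ∂(R.kernel α x), u y = u x) :
    ∀ᵐ x ∂m, ∀ᵐ y ∂(S.kernel α x), u y ≤ u x := by
  have hlevel : ∀ q : ℚ, ∀ᵐ x ∂m, u x ≤ q → S.kernel α x {y | q < u y} = 0 := fun q =>
    hD.ae_dual_kernel_eq_zero hα (measurableSet_lt measurable_const hmu)
      (measurableSet_le hmu measurable_const) <| h.mono fun x hx hqx =>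
        measure_mono_null (fun y (hy : u y ≤ q) hyx => (hy.trans_lt hqx).ne hyx) (ae_iff.1 hx)
  filter_upwards [ae_all_iff.2 hlevel] with x hx
  refine ae_le_of_forall_rat_lt fun q hq => ae_iff.2 ?_
  simpa using hx q hq.le

lemma ae_dual_kernel_eq (hD : R.InDuality S m) {α : ℝ} (hα : 0 < α) {u : E → ℝ}
    (hmu : Measurable u) (h : ∀ᵐ x ∂m, ∀ᵐ y ∂(R.kernel α x), u y = u x) :
    ∀ᵐ x ∂m, ∀ᵐ y ∂(S.kernel α x), u y = u x := by
  have hneg : ∀ᵐ x ∂m, ∀ᵐ y ∂(R.kernel α x), -u y = -u x :=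
    h.mono fun x hx => hx.mono fun y hy => by rw [hy]
  filter_upwards [hD.ae_dual_kernel_le hα hmu h, hD.ae_dual_kernel_le hα hmu.neg hneg]
    with x hle hge
  filter_upwards [hle, hge] with y hy hy'
  exact le_antisymm hy (neg_le_neg_iff.1 hy')

lemma ae_dual_mass_eq_one_of_memLp (hD : R.InDuality S m) {α : ℝ} (hα : 0 < α)
    {p : ℝ≥0∞} (hp : p ≠ 0) (hp' : p ≠ ⊤) {u : E → ℝ} (hmu : Measurable u) (hu : MemLp u p m)
    (h : ∀ᵐ x ∂m, (∀ᵐ y ∂(R.kernel α x), u y = u x) ∧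
      (u x ≠ 0 → ENNReal.ofReal α * R.kernel α x univ = 1)) :
    ∀ᵐ x ∂m, u x ≠ 0 → ENNReal.ofReal α * S.kernel α x univ = 1 := by
  have hlevel : ∀ n : ℕ, ∀ᵐ x ∂m, (n : ℝ≥0∞)⁻¹ ≤ ‖u x‖₊ →
      ENNReal.ofReal α * S.kernel α x univ = 1 := fun n => by
    have hB : MeasurableSet {x | (n : ℝ≥0∞)⁻¹ ≤ ‖u x‖₊} :=
      measurableSet_le measurable_const hmu.nnnorm.coe_nnreal_ennreal
    refine hD.ae_dual_mass_eq_one (B := {x | (n : ℝ≥0∞)⁻¹ ≤ ‖u x‖₊}) hα hB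
      (hu.meas_ge_lt_top' hp hp' (by simp)).ne ?_
    filter_upwards [h] with x hx hxB
    have hux : u x ≠ 0 := fun h0 => by simp [h0] at hxB
    have hBx : {x | (n : ℝ≥0∞)⁻¹ ≤ ‖u x‖₊} =ᵐ[R.kernel α x] univ :=
      ae_eq_univ.2 (ae_iff.1 (hx.1.mono fun y hy => by rwa [mem_ofPred_eq, hy]))
    rw [measure_congr hBx, hx.2 hux]
  filter_upwards [ae_all_iff.2 hlevel] with x hx hux
  obtain ⟨n, hn⟩ := exists_inv_nat_lt (a := ‖u x‖₊) (by simpa using hux)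
  exact hx n hn.le

end SubMarkovResolvent.InDuality

theorem harmonic_implies_invariant_general {E : Type*} [MeasurableSpace E]
    (R S : SubMarkovResolvent E) (m : MeasureTheory.Measure E)
    (hm : R.SubInvariant m) (hD : R.InDuality S m)
    (p : ℝ≥0∞) (hp : 1 ≤ p) (hp' : p ≠ ⊤)
    (u : E → ℝ) (hmu : Measurable u) (hu : MeasureTheory.MemLp u p m)
    (hharm : ∀ α : ℝ, 0 < α → ∀ᵐ x ∂m, α * R.opR α u x = u x) :
    (∀ c : ℝ, 0 ≤ c → R.Absorbing m {x | u x ≤ c}) ∧ R.Invariant m u ∧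
      (∀ α : ℝ, 0 < α → ∀ᵐ x ∂m, α * S.opR α u x = u x) := by
  have hkey : ∀ α : ℝ, 0 < α → ∀ᵐ x ∂m, (∀ᵐ y ∂(R.kernel α x), u y = u x) ∧
      (u x ≠ 0 → ENNReal.ofReal α * R.kernel α x univ = 1) := fun α hα =>
    R.ae_kernel_eq_of_harmonic hm hp hp' hmu hu hα (hharm α hα)
  refine ⟨fun c _ => ?_, fun α hα f _ _ _ => ?_, fun α hα => ?_⟩
  · have hA : MeasurableSet {x | u x ≤ c} := measurableSet_le hmu measurable_const
    refine ⟨hA, ?_⟩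
    filter_upwards [ae_all_iff.2 fun n : ℕ => hkey (1 / (n + 1)) (by positivity)] with x hx hxA
    exact R.pot_indicator_eq_zero hA.compl fun n =>
      ae_iff.1 ((hx n).1.mono fun y hy => show y ∈ {x | u x ≤ c} by rwa [mem_ofPred_eq, hy])
  · filter_upwards [hkey α hα] with x hx
    calc R.opR α (fun y => u y * f y) x = ∫ y, u x * f y ∂(R.kernel α x) :=
          integral_congr_ae (hx.1.mono fun y hy => congrArg (· * f y) hy)
      _ = u x * R.opR α f x := integral_const_mul _ _
  · have := S.isFiniteMeasure_kernel hα
    filter_upwards [hD.ae_dual_kernel_eq hα hmu ((hkey α hα).mono fun x hx => hx.1),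
      hD.ae_dual_mass_eq_one_of_memLp hα (zero_lt_one.trans_le hp).ne' hp' hmu hu (hkey α hα)]
      with x hconst hmass
    rw [SubMarkovResolvent.opR, integral_congr_ae hconst, integral_const, smul_eq_mul]
    rcases eq_or_ne (u x) 0 with h0 | h0
    · simp [h0]
    · have hmass' : α * (S.kernel α x).real univ = 1 := by
        simpa [measureReal_def, toReal_mul, toReal_ofReal hα.le] using
          congrArg ENNReal.toReal (hmass h0)
      rw [← mul_assoc, hmass', one_mul]

/-- If `u ∈ L^p(E,m)`, `1 ≤ p < ∞`, satisfies `α U_α u = u` `m`-a.e. for all `α > 0`, then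
`{u ≤ c}` is `U`-absorbing for every `c ≥ 0`, `u` is `U`-invariant, and
`α U*_α u = u` `m`-a.e. for all `α > 0`. -/
theorem harmonic_implies_invariant {E : Type*} [MeasurableSpace E]
    (R S : SubMarkovResolvent E) (m : MeasureTheory.Measure E) [MeasureTheory.SigmaFinite m]
    (hm : R.SubInvariant m) (hD : R.InDuality S m)
    (p : ℝ≥0∞) (hp : 1 ≤ p) (hp' : p ≠ ⊤)
    (u : E → ℝ) (hmu : Measurable u) (hu : MeasureTheory.MemLp u p m)
    (hharm : ∀ α : ℝ, 0 < α → ∀ᵐ x ∂m, α * R.opR α u x = u x) :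
    (∀ c : ℝ, 0 ≤ c → R.Absorbing m {x | u x ≤ c}) ∧ R.Invariant m u ∧
      (∀ α : ℝ, 0 < α → ∀ᵐ x ∂m, α * S.opR α u x = u x) :=
  harmonic_implies_invariant_general R S m hm hD p hp hp' u hmu hu hharm
end
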